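/- For any q ≥ 0, the curl of every element of the Nédélec space ND_q := [P_q]³ + x × [P_q]³ on ℝ³ belongs to the Raviart–Thomas space RT_q := [P_q]³ + P_q·x, and is divergence-free. Hence curl(ND_q) ⊆ {w ∈ RT_q : div w = 0}. -/

import Mathlib

open Matrix

/-- Partial derivative in the `i`-th coordinate direction. -/
noncomputable def pd (i : Fin 3) (f : (Fin 3 → ℝ) → ℝ) (x : Fin 3 → ℝ) : ℝ :=
  fderiv ℝ f x (Pi.single i 1)

/-- Divergence of a vector field on ℝ³. -/
noncomputable def divergence (v : (Fin 3 → ℝ) → Fin 3 → ℝ) (x : Fin 3 → ℝ) : ℝ :=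
  ∑ i, pd i (fun y => v y i) x

/-- Curl of a vector field on ℝ³. -/
noncomputable def curl (v : (Fin 3 → ℝ) → Fin 3 → ℝ) (x : Fin 3 → ℝ) : Fin 3 → ℝ :=
  ![pd 1 (fun y => v y 2) x - pd 2 (fun y => v y 1) x,
    pd 2 (fun y => v y 0) x - pd 0 (fun y => v y 2) x,
    pd 0 (fun y => v y 1) x - pd 1 (fun y => v y 0) x]

/-- `f` is a scalar polynomial map of total degree at most `q`. -/
def IsScalarPolyDeg (q : ℕ) (f : (Fin 3 → ℝ) → ℝ) : Prop :=
  ∃ p : MvPolynomial (Fin 3) ℝ, p.totalDegree ≤ q ∧ ∀ x, f x = MvPolynomial.eval x p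

/-- `v` is a vector-valued polynomial map with each component of total degree at most `q`. -/
def IsPolyMapDeg (q : ℕ) (v : (Fin 3 → ℝ) → Fin 3 → ℝ) : Prop :=
  ∃ p : Fin 3 → MvPolynomial (Fin 3) ℝ,
    (∀ i, (p i).totalDegree ≤ q) ∧ ∀ x i, v x i = MvPolynomial.eval x (p i)

/-- Membership in the Nédélec space `ND_q = [P_q]³ + x × [P_q]³`. -/
def MemNedelec (q : ℕ) (v : (Fin 3 → ℝ) → Fin 3 → ℝ) : Prop :=
  ∃ v₁ v₂, IsPolyMapDeg q v₁ ∧ IsPolyMapDeg q v₂ ∧ ∀ x, v x = v₁ x + crossProduct x (v₂ x)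

/-- Membership in the Raviart–Thomas space `RT_q = [P_q]³ + P_q x`. -/
def MemRT (q : ℕ) (v : (Fin 3 → ℝ) → Fin 3 → ℝ) : Prop :=
  ∃ v₁ p, IsPolyMapDeg q v₁ ∧ IsScalarPolyDeg q p ∧ ∀ x, v x = v₁ x + p x • x

/-! Every field of `ND_q` is the evaluation of a polynomial field `p + X × r` with `deg p, deg r ≤ q`,
and `curl`, `div` of an evaluated polynomial field are the evaluations of the formal `curl`, `div`.
Formally, `curl (X × r) = (div r) X - 2 r - (X · ∇) r`, and the Euler operator `X · ∇` does not
raise the degree; so `curl (p + X × r) = W + (div r) X` with `deg W ≤ q`.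
`div ∘ curl = 0` because formal partial derivatives commute. -/

open MvPolynomial

namespace MvPolynomial

variable {σ R : Type*} [CommSemiring R]

theorem pderiv_pderiv_comm (i j : σ) (f : MvPolynomial σ R) :
    pderiv i (pderiv j f) = pderiv j (pderiv i f) := by
  classical
  ext m
  simp only [coeff_pderiv, Finsupp.add_apply, add_right_comm m (Finsupp.single i 1)]
  rcases eq_or_ne i j with rfl | hij
  · rfl
  · simp [hij, hij.symm]
    ring

theorem totalDegree_pderiv_le (i : σ) (f : MvPolynomial σ R) :
    (pderiv i f).totalDegree ≤ f.totalDegree := by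
  classical
  conv_lhs => rw [f.as_sum]
  rw [map_sum]
  refine totalDegree_finsetSum_le fun s hs => ?_
  rw [pderiv_monomial]
  refine (totalDegree_monomial_le _ _).trans (le_trans ?_ (le_totalDegree hs))
  exact Finsupp.sum_le_sum_index tsub_le_self (fun _ _ _ _ h => h) (fun _ _ => rfl)

theorem totalDegree_X_mul_pderiv_le (i : σ) (f : MvPolynomial σ R) :
    (X i * pderiv i f).totalDegree ≤ f.totalDegree := by
  conv_lhs => rw [f.as_sum]
  rw [map_sum, Finset.mul_sum]
  refine totalDegree_finsetSum_le fun s hs => ?_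
  rw [X_mul_pderiv_monomial]
  exact (totalDegree_smul_le _ _).trans ((totalDegree_monomial_le _ _).trans (le_totalDegree hs))

theorem totalDegree_sum_X_mul_pderiv_le [Fintype σ] (f : MvPolynomial σ R) :
    (∑ j, X j * pderiv j f).totalDegree ≤ f.totalDegree :=
  totalDegree_finsetSum_le fun j _ => totalDegree_X_mul_pderiv_le j f

end MvPolynomial

section Calculus

variable {𝕜 σ : Type*} [NontriviallyNormedField 𝕜] [Fintype σ]

theorem MvPolynomial.hasFDerivAt_eval (p : MvPolynomial σ 𝕜) (x : σ → 𝕜) :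
    HasFDerivAt (fun y => eval y p)
      (∑ j, eval x (pderiv j p) • ContinuousLinearMap.proj (R := 𝕜) (φ := fun _ : σ => 𝕜) j)
      x := by
  classical
  induction p using MvPolynomial.induction_on with
  | C a =>
    simp only [eval_C]
    refine (hasFDerivAt_const (𝕜 := 𝕜) a x).congr_fderiv ?_
    ext y
    simp
  | add p q hp hq =>
    simp only [map_add]
    refine (hp.fun_add hq).congr_fderiv ?_
    ext y
    simp [add_mul, Finset.sum_add_distrib]
  | mul_X p i hp =>
    simp only [map_mul, eval_X]
    refine (hp.fun_mul (hasFDerivAt_apply i x)).congr_fderiv ?_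
    ext y
    simp [Pi.single_apply, add_mul, Finset.sum_add_distrib, Finset.mul_sum, apply_ite (eval x),
      ite_mul, mul_assoc]

theorem pd_eval (i : Fin 3) (p : MvPolynomial (Fin 3) ℝ) (x : Fin 3 → ℝ) :
    pd i (fun y => eval y p) x = eval x (pderiv i p) := by
  simp [pd, (hasFDerivAt_eval p x).fderiv, Pi.single_apply]

end Calculus

section PolynomialVectorCalculus

variable {R : Type*} [CommRing R]

noncomputable def polyCurl (P : Fin 3 → MvPolynomial (Fin 3) R) : Fin 3 → MvPolynomial (Fin 3) R :=
  ![pderiv 1 (P 2) - pderiv 2 (P 1), pderiv 2 (P 0) - pderiv 0 (P 2),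
    pderiv 0 (P 1) - pderiv 1 (P 0)]

noncomputable def polyDiv (P : Fin 3 → MvPolynomial (Fin 3) R) : MvPolynomial (Fin 3) R :=
  ∑ i, pderiv i (P i)

theorem polyDiv_polyCurl (P : Fin 3 → MvPolynomial (Fin 3) R) : polyDiv (polyCurl P) = 0 := by
  simp only [polyDiv, polyCurl, Fin.sum_univ_three, Matrix.cons_val_zero, Matrix.cons_val_one,
    Matrix.cons_val_two, Matrix.head_cons, Matrix.tail_cons, map_sub]
  rw [pderiv_pderiv_comm 0 1, pderiv_pderiv_comm 0 2, pderiv_pderiv_comm 1 2]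
  ring

theorem polyCurl_add (P Q : Fin 3 → MvPolynomial (Fin 3) R) :
    polyCurl (P + Q) = polyCurl P + polyCurl Q := by
  ext1 i
  fin_cases i <;> simp [polyCurl] <;> ring

theorem polyCurl_X_cross (r : Fin 3 → MvPolynomial (Fin 3) R) :
    polyCurl (X ⨯₃ r) = polyDiv r • X - 2 • r - fun i => ∑ j, X j * pderiv j (r i) := by
  ext1 i
  fin_cases i <;> simp [polyCurl, polyDiv, cross_apply, Fin.sum_univ_three] <;> ring

theorem totalDegree_polyCurl_le {q : ℕ} {P : Fin 3 → MvPolynomial (Fin 3) R}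
    (hP : ∀ i, (P i).totalDegree ≤ q) (i : Fin 3) : (polyCurl P i).totalDegree ≤ q := by
  have h (j k : Fin 3) : (pderiv j (P k) - pderiv k (P j)).totalDegree ≤ q :=
    (totalDegree_sub _ _).trans <| max_le ((totalDegree_pderiv_le _ _).trans (hP k))
      ((totalDegree_pderiv_le _ _).trans (hP j))
  fin_cases i
  exacts [h 1 2, h 2 0, h 0 1]

theorem totalDegree_polyDiv_le {q : ℕ} {P : Fin 3 → MvPolynomial (Fin 3) R}
    (hP : ∀ i, (P i).totalDegree ≤ q) : (polyDiv P).totalDegree ≤ q :=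
  totalDegree_finsetSum_le fun i _ => (totalDegree_pderiv_le _ _).trans (hP i)

theorem exists_polyCurl_add_X_cross_eq {q : ℕ}
    {p r : Fin 3 → MvPolynomial (Fin 3) R} (hp : ∀ i, (p i).totalDegree ≤ q)
    (hr : ∀ i, (r i).totalDegree ≤ q) :
    ∃ W : Fin 3 → MvPolynomial (Fin 3) R,
      (∀ i, (W i).totalDegree ≤ q) ∧ polyCurl (p + X ⨯₃ r) = W + polyDiv r • X := by
  refine ⟨polyCurl p - 2 • r - fun i => ∑ j, X j * pderiv j (r i), fun i => ?_, ?_⟩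
  · have h2r : (2 • r i).totalDegree ≤ q := (totalDegree_smul_le _ _).trans (hr i)
    have hEuler := (totalDegree_sum_X_mul_pderiv_le (r i)).trans (hr i)
    exact (totalDegree_sub _ _).trans <| max_le
      ((totalDegree_sub _ _).trans (max_le (totalDegree_polyCurl_le hp i) h2r)) hEuler
  · rw [polyCurl_add, polyCurl_X_cross]
    abel

end PolynomialVectorCalculus

theorem RingHom.comp_cross {R S : Type*} [CommRing R] [CommRing S] (f : R →+* S)
    (a b : Fin 3 → R) : f ∘ (a ⨯₃ b) = (f ∘ a) ⨯₃ (f ∘ b) := by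
  ext i
  fin_cases i <;> simp [cross_apply]

theorem curl_eval (P : Fin 3 → MvPolynomial (Fin 3) ℝ) :
    curl (fun x i => eval x (P i)) = fun x i => eval x (polyCurl P i) := by
  ext x i
  fin_cases i <;> simp [curl, polyCurl, pd_eval]

theorem divergence_eval (P : Fin 3 → MvPolynomial (Fin 3) ℝ) :
    divergence (fun x i => eval x (P i)) = fun x => eval x (polyDiv P) := by
  ext x
  simp [divergence, polyDiv, pd_eval]

theorem memRT_eval_add_smul_X {q : ℕ} {W : Fin 3 → MvPolynomial (Fin 3) ℝ}
    {D : MvPolynomial (Fin 3) ℝ} (hW : ∀ i, (W i).totalDegree ≤ q) (hD : D.totalDegree ≤ q) :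
    MemRT q (fun x i => eval x ((W + D • (X : Fin 3 → MvPolynomial (Fin 3) ℝ)) i)) :=
  ⟨fun x i => eval x (W i), fun x => eval x D, ⟨W, hW, fun _ _ => rfl⟩, ⟨D, hD, fun _ => rfl⟩,
    fun x => by ext i; simp⟩

theorem MemNedelec.exists_eq_eval {q : ℕ} {v : (Fin 3 → ℝ) → Fin 3 → ℝ} (hv : MemNedelec q v) :
    ∃ p r : Fin 3 → MvPolynomial (Fin 3) ℝ, (∀ i, (p i).totalDegree ≤ q) ∧
      (∀ i, (r i).totalDegree ≤ q) ∧ v = fun x i => eval x ((p + X ⨯₃ r) i) := by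
  obtain ⟨v₁, v₂, ⟨p, hp, hv₁⟩, ⟨r, hr, hv₂⟩, hv⟩ := hv
  refine ⟨p, r, hp, hr, funext fun x => ?_⟩
  have hX : ⇑(eval x) ∘ X = x := funext fun _ => eval_X _
  have hv₂x : ⇑(eval x) ∘ r = v₂ x := funext fun i => (hv₂ x i).symm
  have hcross := (eval x).comp_cross X r
  rw [hX, hv₂x] at hcross
  ext i
  rw [hv x, Pi.add_apply, Pi.add_apply, map_add, hv₁, ← hcross]
  rfl

theorem curl_Nedelec_mem_RT_divFree (q : ℕ) (v : (Fin 3 → ℝ) → Fin 3 → ℝ)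
    (hv : MemNedelec q v) :
    MemRT q (curl v) ∧ ∀ x, divergence (curl v) x = 0 := by
  obtain ⟨p, r, hp, hr, rfl⟩ := hv.exists_eq_eval
  obtain ⟨W, hW, hcurl⟩ := exists_polyCurl_add_X_cross_eq hp hr
  rw [curl_eval]
  refine ⟨hcurl ▸ memRT_eval_add_smul_X hW (totalDegree_polyDiv_le hr), fun x => ?_⟩
  simp [divergence_eval, polyDiv_polyCurl]
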